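/- With the same alternating random product Y_t in the dihedral group D_{2l} of order 4l (l ≥ 4), the probability that the word length |Y_t| lies in the interval [3l/2, 2l] is at most the probability that |Y_t| lies in [l/2, 3l/2]. -/

import Mathlib

/-- Word length of `g` with respect to a set `S` of generators. -/
noncomputable def lengthWrt {G : Type*} [Group G] (S : Set G) (g : G) : ℕ :=
  sInf {n | ∃ L : List G, (∀ x ∈ L, x ∈ S) ∧ L.length = n ∧ L.prod = g}

/-- The generators `a = sr 0`, `b = sr 1` of the dihedral group. -/
def dihGens (l : ℕ) : Set (DihedralGroup l) := {DihedralGroup.sr 0, DihedralGroup.sr 1}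

/-- The alternating random product `Y_t = a^{ε₁} b^{ε₂} a^{ε₃} ⋯` (t factors). -/
def altProd (l t : ℕ) (ε : Fin t → Bool) : DihedralGroup l :=
  ((List.finRange t).map (fun i =>
    if ε i then (if (i : ℕ) % 2 = 0 then DihedralGroup.sr 0 else DihedralGroup.sr 1)
    else 1)).prod

/-!
Write `a = sr 0` and `b = sr 1`. Every element is `r k` or `a * r k = sr k`, so `k = rotIndex g`
labels the coset `{g, a * g}`, and right multiplication by `a` resp. `b` acts on these labels by
the reflections `x ↦ -x` resp. `x ↦ 1 - x` of `ZMod n`. Listed as `0, 1, -1, 2, -2, …`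
(`zigzag`), the labels form a path whose position is the distance `d(g, {1, a})`, and
`d ≤ |g| ≤ d + 1`. A step of `Y_t` replaces the counts along the path by sums over consecutive
pairs, which keeps them nonincreasing; from the point mass at `0` the distribution of
`d(Y_t, {1, a})` is therefore nonincreasing. Shifting by `⌈l/2⌉` then maps the values of `d`
compatible with `|Y_t| ∈ [3l/2, 2l]` into those forcing `|Y_t| ∈ [l/2, 3l/2]`.
-/

open Finset

lemma AntitoneOn.Iic_succ {α : Type*} [Preorder α] {f : ℕ → α} {m : ℕ}
    (hf : AntitoneOn f (Set.Iic m)) (hm : f (m + 1) = f m) : AntitoneOn f (Set.Iic (m + 1)) := by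
  intro i hi j hj hij
  simp only [Set.mem_Iic] at hi hj
  rcases hj.lt_or_eq with hj | rfl
  · exact hf (by simp; omega) (by simp; omega) hij
  · rcases hi.lt_or_eq with hi | rfl
    · rw [hm]; exact hf (by simp; omega) (by simp) (by omega)
    · rfl

lemma Finset.sum_Ico_le_sum_Ico_of_antitone {M : ℕ → ℕ} (hM : Antitone M) {a b c d s : ℕ}
    (hc : a + s ≤ c) (hd : d ≤ b + s) : ∑ j ∈ Ico c d, M j ≤ ∑ j ∈ Ico a b, M j :=
  calc ∑ j ∈ Ico c d, M j
      ≤ ∑ j ∈ Ico (a + s) (b + s), M j := sum_le_sum_of_subset (Ico_subset_Ico hc hd)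
    _ = ∑ j ∈ Ico a b, M (j + s) := (sum_Ico_add' M a b s).symm
    _ ≤ ∑ j ∈ Ico a b, M j := sum_le_sum fun j _ => hM (Nat.le_add_right j s)

section WordLength
variable {G : Type*} [Group G] {S : Set G}

lemma lengthWrt_prod_le {L : List G} (hL : ∀ x ∈ L, x ∈ S) :
    lengthWrt S L.prod ≤ L.length :=
  Nat.sInf_le ⟨L, hL, rfl, rfl⟩

lemma apply_prod_le_length {f : G → ℕ} (hf₁ : f 1 = 0)
    (hf : ∀ s ∈ S, ∀ g, f (s * g) ≤ f g + 1) {L : List G} (hL : ∀ x ∈ L, x ∈ S) :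
    f L.prod ≤ L.length := by
  induction L with
  | nil => simp [hf₁]
  | cons s L ih =>
    have hs := hf s (hL s List.mem_cons_self) L.prod
    have hL' := ih fun x hx => hL x (List.mem_cons_of_mem s hx)
    simp only [List.prod_cons, List.length_cons]
    omega

lemma le_lengthWrt_of_mul_le {f : G → ℕ} (hf₁ : f 1 = 0)
    (hf : ∀ s ∈ S, ∀ g, f (s * g) ≤ f g + 1) {g : G}
    (hg : ∃ L : List G, (∀ x ∈ L, x ∈ S) ∧ L.prod = g) : f g ≤ lengthWrt S g := by
  obtain ⟨L, hL, hLg⟩ := hg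
  refine le_csInf ⟨L.length, L, hL, rfl, hLg⟩ ?_
  rintro _ ⟨M, hM, rfl, rfl⟩
  exact apply_prod_le_length hf₁ hf hM

end WordLength

section Zigzag

def zigzag (i : ℕ) : ℤ := if i % 2 = 0 then -(i / 2 : ℕ) else (i / 2 + 1 : ℕ)

lemma zigzag_succ (i : ℕ) : zigzag (i + 1) = if i % 2 = 0 then 1 - zigzag i else -zigzag i := by
  unfold zigzag; split_ifs <;> omega

lemma zigzag_self_sub_zigzag_pred (n : ℕ) :
    zigzag n - zigzag (n - 1) = n ∨ zigzag n - zigzag (n - 1) = -n := by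
  unfold zigzag; split_ifs <;> omega

def stepReflect {R : Type*} [Ring R] (t : ℕ) (x : R) : R := if t % 2 = 0 then -x else 1 - x

lemma stepReflect_eq_iff {R : Type*} [Ring R] {t : ℕ} {x y : R} :
    stepReflect t y = x ↔ y = stepReflect t x := by
  unfold stepReflect
  split_ifs <;> constructor <;> rintro rfl <;> abel

lemma Int.cast_stepReflect {R : Type*} [Ring R] (t : ℕ) (z : ℤ) :
    ((stepReflect t z : ℤ) : R) = stepReflect t (z : R) := by
  unfold stepReflect; split_ifs <;> push_cast <;> rfl

/-- `{pairLo t j, pairHi t j}` are the zigzag positions merged by `stepReflect t`: `{2m - 1, 2m}`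
for even `t` (at `j = 0` truncated subtraction gives `{0, 0}`) and `{2m, 2m + 1}` for odd `t`. -/
def pairLo (t j : ℕ) : ℕ := if t % 2 = 0 then 2 * ((j + 1) / 2) - 1 else 2 * (j / 2)

def pairHi (t j : ℕ) : ℕ := if t % 2 = 0 then 2 * ((j + 1) / 2) else 2 * (j / 2) + 1

lemma monotone_pairLo (t : ℕ) : Monotone (pairLo t) := fun i j h => by
  unfold pairLo; split_ifs <;> omega

lemma monotone_pairHi (t : ℕ) : Monotone (pairHi t) := fun i j h => by
  unfold pairHi; split_ifs <;> omega

lemma pairLo_le (t j : ℕ) : pairLo t j ≤ j := by unfold pairLo; split_ifs <;> omega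

lemma pairHi_le (t j : ℕ) : pairHi t j ≤ j + 1 := by unfold pairHi; split_ifs <;> omega

lemma zigzag_pairLo_pairHi (t j : ℕ) :
    (zigzag (pairLo t j) = zigzag j ∧ zigzag (pairHi t j) = stepReflect t (zigzag j)) ∨
      (zigzag (pairLo t j) = stepReflect t (zigzag j) ∧ zigzag (pairHi t j) = zigzag j) := by
  unfold pairLo pairHi stepReflect zigzag; split_ifs <;> omega

end Zigzag

namespace ZMod
variable {n : ℕ}

def zigzagIndex (x : ZMod n) : ℕ :=
  if 0 < x.valMinAbs then 2 * x.valMinAbs.toNat - 1 else 2 * (-x.valMinAbs).toNat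

lemma zigzag_zigzagIndex (x : ZMod n) : zigzag (zigzagIndex x) = x.valMinAbs := by
  unfold zigzag zigzagIndex; split_ifs <;> omega

lemma intCast_zigzag_zigzagIndex (x : ZMod n) : ((zigzag (zigzagIndex x) : ℤ) : ZMod n) = x := by
  rw [zigzag_zigzagIndex, coe_valMinAbs]

lemma zigzagIndex_le_two_mul_natAbs (x : ZMod n) : zigzagIndex x ≤ 2 * x.valMinAbs.natAbs := by
  unfold zigzagIndex; split_ifs <;> omega

lemma intCast_zigzag_self : ((zigzag n : ℤ) : ZMod n) = zigzag (n - 1) := by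
  rw [← sub_eq_zero, ← Int.cast_sub]
  rcases zigzag_self_sub_zigzag_pred n with h | h <;> simp [h]

lemma natAbs_valMinAbs_add_le_add (x y : ZMod n) :
    (x + y).valMinAbs.natAbs ≤ x.valMinAbs.natAbs + y.valMinAbs.natAbs :=
  (natAbs_valMinAbs_add_le x y).trans (Int.natAbs_add_le _ _)

variable [NeZero n]

lemma zigzagIndex_lt (x : ZMod n) : zigzagIndex x < n := by
  have := x.valMinAbs_mem_Ioc
  simp only [Set.mem_Ioc] at this
  unfold zigzagIndex; split_ifs <;> omega

lemma zigzagIndex_zigzag {i : ℕ} (hi : i < n) : zigzagIndex (zigzag i : ZMod n) = i := by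
  have h : ((zigzag i : ℤ) : ZMod n).valMinAbs = zigzag i := by
    rw [valMinAbs_spec]
    refine ⟨rfl, ?_⟩
    simp only [Set.mem_Ioc]
    unfold zigzag; split_ifs <;> omega
  unfold zigzagIndex; rw [h]; unfold zigzag; split_ifs <;> omega

lemma zigzagIndex_eq_iff {x : ZMod n} {i : ℕ} (hi : i < n) :
    zigzagIndex x = i ↔ x = (zigzag i : ZMod n) := by
  constructor
  · rintro rfl; exact (intCast_zigzag_zigzagIndex x).symm
  · rintro rfl; exact zigzagIndex_zigzag hi

lemma intCast_zigzag_eq_zero_iff {j : ℕ} (hj : j < n) :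
    ((zigzag j : ℤ) : ZMod n) = 0 ↔ j = 0 := by
  rw [eq_comm, ← zigzagIndex_eq_iff hj, eq_comm]
  simp [zigzagIndex]

lemma natAbs_valMinAbs_one_le : (1 : ZMod n).valMinAbs.natAbs ≤ 1 := by
  rw [valMinAbs_natAbs_eq_min, ← Nat.cast_one, val_natCast]
  exact (min_le_left _ _).trans (Nat.mod_le _ _)

lemma natAbs_valMinAbs_add_one_le (x : ZMod n) :
    (x + 1).valMinAbs.natAbs ≤ x.valMinAbs.natAbs + 1 :=
  (natAbs_valMinAbs_add_le_add x 1).trans (Nat.add_le_add_left natAbs_valMinAbs_one_le _)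

lemma natAbs_valMinAbs_sub_one_le (x : ZMod n) :
    (x - 1).valMinAbs.natAbs ≤ x.valMinAbs.natAbs + 1 := by
  rw [sub_eq_add_neg]
  refine (natAbs_valMinAbs_add_le_add x (-1)).trans (Nat.add_le_add_left ?_ _)
  rw [natAbs_valMinAbs_neg]
  exact natAbs_valMinAbs_one_le

lemma natAbs_valMinAbs_natCast_of_le {m : ℕ} (hm : m ≤ n) :
    (m : ZMod n).valMinAbs.natAbs = min m (n - m) := by
  rw [valMinAbs_natAbs_eq_min, val_natCast]
  rcases hm.lt_or_eq with hm | rfl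
  · rw [Nat.mod_eq_of_lt hm]
  · simp

lemma zigzagIndex_le_natAbs_add_natAbs_sub_one (x : ZMod n) :
    zigzagIndex x ≤ x.valMinAbs.natAbs + (x - 1).valMinAbs.natAbs := by
  have hx := x.valMinAbs_mem_Ioc
  simp only [Set.mem_Ioc] at hx
  have htri := natAbs_valMinAbs_add_one_le (x - 1)
  rw [sub_add_cancel] at htri
  unfold zigzagIndex
  split_ifs with hv
  · omega
  · set m := (-x.valMinAbs).toNat with hm
    have hcast : ((m : ℕ) : ZMod n) = ((-x.valMinAbs : ℤ) : ZMod n) := by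
      rw [← Int.cast_natCast, hm, Int.toNat_of_nonneg (by omega)]
    have hx1 : x - 1 = -((m + 1 : ℕ) : ZMod n) := by
      nth_rewrite 1 [← x.coe_valMinAbs]
      push_cast [hcast]
      ring
    rw [hx1, natAbs_valMinAbs_neg, natAbs_valMinAbs_natCast_of_le (by omega)]
    omega

end ZMod

namespace DihedralGroup
variable {n : ℕ}

def rotIndex : DihedralGroup n → ZMod n
  | r k => k
  | sr k => k

@[simp] lemma rotIndex_r (k : ZMod n) : rotIndex (r k) = k := rfl

@[simp] lemma rotIndex_sr (k : ZMod n) : rotIndex (sr k) = k := rfl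

@[simp] lemma rotIndex_one : rotIndex (1 : DihedralGroup n) = 0 := rfl

lemma rotIndex_mul_sr_zero (g : DihedralGroup n) : rotIndex (g * sr 0) = -rotIndex g := by
  cases g <;> simp

lemma rotIndex_mul_sr_one (g : DihedralGroup n) : rotIndex (g * sr 1) = 1 - rotIndex g := by
  cases g <;> simp

lemma eq_or_eq_sr_zero_mul_of_rotIndex_eq {g h : DihedralGroup n}
    (hgh : rotIndex g = rotIndex h) : g = h ∨ g = sr 0 * h := by
  cases g <;> cases h <;> simp_all

/-- For even `n` this is the word length: the Cayley graph is a `2n`-cycle on which `r k` and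
`sr k` sit at positions `2k` and `1 - 2k`. -/
def wordNorm : DihedralGroup n → ℕ
  | r k => 2 * k.valMinAbs.natAbs
  | sr k => k.valMinAbs.natAbs + (k - 1).valMinAbs.natAbs

lemma wordNorm_mul_le [NeZero n] {s : DihedralGroup n} (hs : s ∈ dihGens n)
    (g : DihedralGroup n) : wordNorm (s * g) ≤ wordNorm g + 1 := by
  rcases hs with rfl | rfl
  · cases g with
    | r k =>
      have := ZMod.natAbs_valMinAbs_sub_one_le k
      simp only [wordNorm, sr_mul_r, zero_add]
      omega
    | sr k =>
      have := ZMod.natAbs_valMinAbs_add_one_le (k - 1)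
      simp only [wordNorm, sr_mul_sr, sub_zero, sub_add_cancel] at this ⊢
      omega
  · cases g with
    | r k =>
      have := ZMod.natAbs_valMinAbs_add_one_le k
      simp only [wordNorm, sr_mul_r, add_comm (1 : ZMod n), add_sub_cancel_right]
      omega
    | sr k =>
      have := ZMod.natAbs_valMinAbs_sub_one_le k
      simp only [wordNorm, sr_mul_sr]
      omega

def zigzagWord (n i : ℕ) : List (DihedralGroup n) :=
  (List.range i).map fun j => if j % 2 = 0 then sr 1 else sr 0

lemma rotIndex_prod_zigzagWord (i : ℕ) : rotIndex (zigzagWord n i).prod = zigzag i := by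
  induction i with
  | zero => simp [zigzagWord, zigzag]
  | succ i ih =>
    rw [zigzagWord, List.range_succ, List.map_append, List.prod_append, ← zigzagWord,
      zigzag_succ]
    rcases Nat.mod_two_eq_zero_or_one i with h | h <;>
      simp [h, rotIndex_mul_sr_one, rotIndex_mul_sr_zero, ih]

lemma mem_dihGens_of_mem_zigzagWord {i : ℕ} {x : DihedralGroup n} (hx : x ∈ zigzagWord n i) :
    x ∈ dihGens n := by
  simp only [zigzagWord, List.mem_map] at hx
  obtain ⟨j, -, rfl⟩ := hx
  split_ifs <;> simp [dihGens]

def distToA (g : DihedralGroup n) : ℕ := (rotIndex g).zigzagIndex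

lemma exists_word_length_le_distToA_add_one (g : DihedralGroup n) :
    ∃ L : List (DihedralGroup n), (∀ x ∈ L, x ∈ dihGens n) ∧ L.prod = g ∧
      L.length ≤ distToA g + 1 := by
  have hw : rotIndex g = rotIndex (zigzagWord n (distToA g)).prod := by
    rw [rotIndex_prod_zigzagWord, distToA, ZMod.intCast_zigzag_zigzagIndex]
  have hlen : (zigzagWord n (distToA g)).length = distToA g := by simp [zigzagWord]
  rcases eq_or_eq_sr_zero_mul_of_rotIndex_eq hw with hg | hg
  · exact ⟨_, fun x => mem_dihGens_of_mem_zigzagWord, hg.symm, by omega⟩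
  · refine ⟨sr 0 :: zigzagWord n (distToA g), ?_, List.prod_cons.trans hg.symm, by simp [hlen]⟩
    rintro x (_ | ⟨_, hx⟩)
    · simp [dihGens]
    · exact mem_dihGens_of_mem_zigzagWord hx

lemma lengthWrt_le_distToA_add_one (g : DihedralGroup n) :
    lengthWrt (dihGens n) g ≤ distToA g + 1 := by
  obtain ⟨L, hL, rfl, hlen⟩ := exists_word_length_le_distToA_add_one g
  exact (lengthWrt_prod_le hL).trans hlen

section
variable [NeZero n]

lemma distToA_lt (g : DihedralGroup n) : distToA g < n := ZMod.zigzagIndex_lt _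

lemma distToA_le_wordNorm (g : DihedralGroup n) : distToA g ≤ wordNorm g := by
  cases g with
  | r k => exact ZMod.zigzagIndex_le_two_mul_natAbs k
  | sr k => exact ZMod.zigzagIndex_le_natAbs_add_natAbs_sub_one k

lemma distToA_le_lengthWrt (g : DihedralGroup n) : distToA g ≤ lengthWrt (dihGens n) g := by
  obtain ⟨L, hL, hLg, -⟩ := exists_word_length_le_distToA_add_one g
  refine (distToA_le_wordNorm g).trans (le_lengthWrt_of_mul_le ?_ ?_ ⟨L, hL, hLg⟩)
  · rw [one_def]; simp [wordNorm]
  · exact fun s hs => wordNorm_mul_le hs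

end

lemma altProd_snoc (t : ℕ) (ε : Fin t → Bool) (β : Bool) :
    altProd n (t + 1) (Fin.snoc ε β) =
      altProd n t ε * if β then (if t % 2 = 0 then sr 0 else sr 1) else 1 := by
  simp only [altProd, List.finRange_succ_last, List.map_append, List.prod_append, List.map_map]
  congr 1
  · congr 1
    exact List.map_congr_left fun i _ => by simp
  · simp

lemma rotIndex_altProd_snoc (t : ℕ) (ε : Fin t → Bool) (β : Bool) :
    rotIndex (altProd n (t + 1) (Fin.snoc ε β)) =
      if β then stepReflect t (rotIndex (altProd n t ε)) else rotIndex (altProd n t ε) := by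
  rw [altProd_snoc, stepReflect]
  split_ifs <;> simp [rotIndex_mul_sr_zero, rotIndex_mul_sr_one]

def rotCount (n t : ℕ) (x : ZMod n) : ℕ :=
  #{ε : Fin t → Bool | rotIndex (altProd n t ε) = x}

lemma rotCount_zero (x : ZMod n) : rotCount n 0 x = if x = 0 then 1 else 0 := by
  have h (ε : Fin 0 → Bool) : altProd n 0 ε = 1 := by simp [altProd]
  by_cases hx : x = 0 <;> simp [rotCount, h, hx, eq_comm]

lemma rotCount_succ (t : ℕ) (x : ZMod n) :
    rotCount n (t + 1) x = rotCount n t x + rotCount n t (stepReflect t x) := by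
  simp only [rotCount, card_filter]
  rw [← (Fin.snocEquiv fun _ => Bool).sum_comp, Fintype.sum_prod_type, Fintype.sum_bool]
  have hsnoc (β : Bool) (ε : Fin t → Bool) :
      (Fin.snocEquiv fun _ => Bool) (β, ε) = Fin.snoc ε β := rfl
  simp only [hsnoc, rotIndex_altProd_snoc, if_true, Bool.false_eq_true, if_false,
    stepReflect_eq_iff]
  rw [add_comm]

lemma rotCount_succ_zigzag (t j : ℕ) :
    rotCount n (t + 1) (zigzag j) =
      rotCount n t (zigzag (pairLo t j)) + rotCount n t (zigzag (pairHi t j)) := by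
  rw [rotCount_succ]
  rcases zigzag_pairLo_pairHi t j with ⟨hlo, hhi⟩ | ⟨hlo, hhi⟩
  · rw [hlo, hhi, Int.cast_stepReflect]
  · rw [hlo, hhi, Int.cast_stepReflect, add_comm]

variable [NeZero n]

lemma antitoneOn_rotCount_zigzag (t : ℕ) :
    AntitoneOn (fun j => rotCount n t (zigzag j)) (Set.Iic (n - 1)) := by
  have hn : n - 1 + 1 = n := Nat.sub_add_cancel (Nat.one_le_iff_ne_zero.mpr (NeZero.ne n))
  induction t with
  | zero =>
    intro i hi j hj hij
    simp only [Set.mem_Iic] at hi hj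
    simp only [rotCount_zero, ZMod.intCast_zigzag_eq_zero_iff (show i < n by omega),
      ZMod.intCast_zigzag_eq_zero_iff (show j < n by omega)]
    split_ifs <;> omega
  | succ t ih =>
    have ih' := ih.Iic_succ (by simp only [hn, ZMod.intCast_zigzag_self])
    rw [hn] at ih'
    intro i hi j hj hij
    simp only [Set.mem_Iic] at hi hj
    simp only [rotCount_succ_zigzag]
    have := pairLo_le t i
    have := pairHi_le t i
    have := pairLo_le t j
    have := pairHi_le t j
    exact add_le_add
      (ih' (by simp; omega) (by simp; omega) (monotone_pairLo t hij))
      (ih' (by simp; omega) (by simp; omega) (monotone_pairHi t hij))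

theorem antitone_card_distToA (t : ℕ) :
    Antitone fun j => #{ε : Fin t → Bool | distToA (altProd n t ε) = j} := by
  have hcard (j : ℕ) : #{ε : Fin t → Bool | distToA (altProd n t ε) = j} =
      if j < n then rotCount n t (zigzag j) else 0 := by
    split_ifs with hj
    · simp only [distToA, ZMod.zigzagIndex_eq_iff hj, rotCount]
    · simp only [card_eq_zero, filter_eq_empty_iff]
      exact fun ε _ h => hj (h ▸ distToA_lt _)
  intro i j hij
  simp only [hcard]
  split_ifs with hj hi hi
  · exact antitoneOn_rotCount_zigzag t (by simp; omega) (by simp; omega) hij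
  · omega
  · exact Nat.zero_le _
  · exact le_rfl

end DihedralGroup

open DihedralGroup in
/-- In `D_{2l}` (l ≥ 4), for the alternating random product `Y_t`,
`P(|Y_t| ∈ [3l/2, 2l]) ≤ P(|Y_t| ∈ [l/2, 3l/2])`.
(Probabilities are expressed by counting uniform sample points, and half-integer
bounds are cleared by multiplying word lengths by 2.) -/
theorem stmt6 (l : ℕ) (hl : 4 ≤ l) (t : ℕ) :
    Nat.card {ε : Fin t → Bool //
        3 * l ≤ 2 * lengthWrt (dihGens (2 * l)) (altProd (2 * l) t ε) ∧
        2 * lengthWrt (dihGens (2 * l)) (altProd (2 * l) t ε) ≤ 4 * l} ≤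
      Nat.card {ε : Fin t → Bool //
        l ≤ 2 * lengthWrt (dihGens (2 * l)) (altProd (2 * l) t ε) ∧
        2 * lengthWrt (dihGens (2 * l)) (altProd (2 * l) t ε) ≤ 3 * l} := by
  have : NeZero (2 * l) := ⟨by omega⟩
  set Y := altProd (2 * l) t
  have hbounds (ε : Fin t → Bool) : distToA (Y ε) ≤ lengthWrt (dihGens (2 * l)) (Y ε) ∧
      lengthWrt (dihGens (2 * l)) (Y ε) ≤ distToA (Y ε) + 1 ∧ distToA (Y ε) < 2 * l :=
    ⟨distToA_le_lengthWrt _, lengthWrt_le_distToA_add_one _, distToA_lt _⟩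
  simp only [Nat.card_eq_fintype_card, Fintype.card_subtype]
  calc _ ≤ #{ε | distToA (Y ε) ∈ Ico ((3 * l - 1) / 2) (2 * l)} :=
        card_le_card (monotone_filter_right _ fun ε _ h => by
          have := hbounds ε; simp only [mem_Ico]; omega)
    _ = ∑ j ∈ Ico ((3 * l - 1) / 2) (2 * l), #{ε | distToA (Y ε) = j} :=
        (sum_card_fiberwise_eq_card_filter _ _ _).symm
    _ ≤ ∑ j ∈ Ico ((l + 1) / 2) (3 * l / 2), #{ε | distToA (Y ε) = j} :=
        sum_Ico_le_sum_Ico_of_antitone (antitone_card_distToA t) (s := (l + 1) / 2)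
          (by omega) (by omega)
    _ = #{ε | distToA (Y ε) ∈ Ico ((l + 1) / 2) (3 * l / 2)} :=
        sum_card_fiberwise_eq_card_filter _ _ _
    _ ≤ _ := card_le_card (monotone_filter_right _ fun ε _ h => by
          have := hbounds ε; have := mem_Ico.mp h; omega)
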